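/- arXiv:2404.11837 — 2 statements merged into one kernel-verified Lean document; each statement's English description precedes it below -/
import Mathlib

section
/- Let d ≥ 1 and N ≥ 1, let Δ_d be a finite collection of d-element subsets of {1,…,N}, and let v_1,…,v_N ∈ ℝ^d be such that for each σ ∈ Δ_d the set {v_k : k ∈ σ} is a basis of ℝ^d. Let w = (w_σ)_{σ∈Δ_d} be balanced, let f ∈ ℝ[∂_1,…,∂_N] be homogeneous of degree d, and let v_0 ∈ ℝ^d be such that X_i^σ := λ_{σ,i}(v_0) ≠ 0 for every σ ∈ Δ_d and i ∈ σ. Then the rational function Σ_{σ∈Δ_d} w_σ · f_σ/χ_σ is a constant polynomial, and its value equals Σ_{σ∈Δ_d} w_σ · f(X^σ) / ∏_{i∈σ} X_i^σ, where f(X^σ) denotes the real number obtained from f by substituting X_i^σ for ∂_i when i ∈ σ and 0 for ∂_i when i ∉ σ. -/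
open MvPolynomial

/-- The dual-basis linear functional `λ_{σ,i}` (with coefficient vector `L σ i`),
regarded as a homogeneous linear polynomial in `ℝ[t_1,…,t_d]`. -/
noncomputable def lamPoly (d N : ℕ) (L : Finset (Fin N) → Fin N → Fin d → ℝ)
    (σ : Finset (Fin N)) (i : Fin N) : MvPolynomial (Fin d) ℝ :=
  ∑ j, C (L σ i j) * X j

/-- `χ_σ = ∏_{i∈σ} λ_{σ,i}`. -/
noncomputable def chiPoly (d N : ℕ) (L : Finset (Fin N) → Fin N → Fin d → ℝ)
    (σ : Finset (Fin N)) : MvPolynomial (Fin d) ℝ :=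
  ∏ i ∈ σ, lamPoly d N L σ i

/-- `f_σ ∈ ℝ[t_1,…,t_d]`: the result of substituting `λ_{σ,i}` for `∂_i` (`i ∈ σ`)
and `0` for `∂_i` (`i ∉ σ`) in `f ∈ ℝ[∂_1,…,∂_N]`. -/
noncomputable def fSigma (d N : ℕ) [DecidableEq (Fin N)]
    (L : Finset (Fin N) → Fin N → Fin d → ℝ)
    (f : MvPolynomial (Fin N) ℝ) (σ : Finset (Fin N)) : MvPolynomial (Fin d) ℝ :=
  aeval (fun i : Fin N => if i ∈ σ then lamPoly d N L σ i else 0) f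

/-!
Clearing denominators, the claim is that `Q = ∏_σ χ_σ` divides
`P = ∑_σ w_σ f_σ ∏_{σ' ≠ σ} χ_σ'`: since `P` and `Q` are homogeneous of the same degree, the
quotient is then a constant, and evaluating at `v₀` identifies it. The polynomial `Q` is a product
of linear forms, which are prime, so it suffices to show that every linear form `ℓ = ⟨b, ·⟩`
divides `P` as often as it divides `Q`. The cones `σ` with `ℓ ∣ χ_σ` are those having a facet
`τ` on the hyperplane `ℓ = 0`, and each of them contributes a single factor `ℓ`. Modulo `ℓ`, the
terms of the cones sharing a facet `τ` agree up to the factor `w_σ ⟨b, v_{σ \ τ}⟩`, and the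
balancing condition at `τ` says exactly that these residues add up to zero.
-/

open Finset

open scoped Classical in
theorem prod_dvd_of_forall_pow_card_associated_dvd {M ι : Type*} [CommMonoidWithZero M]
    [IsCancelMulZero M] {p : ι → M} {P : M} (K : Finset ι)
    (hp : ∀ k ∈ K, Prime (p k))
    (hP : ∀ k ∈ K, p k ^ #{j ∈ K | Associated (p j) (p k)} ∣ P) : ∏ k ∈ K, p k ∣ P := by
  induction K using Finset.strongInduction with
  | H K ih =>
    obtain rfl | ⟨k, hk⟩ := K.eq_empty_or_nonempty
    · simp
    set E := {j ∈ K | Associated (p j) (p k)}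
    have hEK : E ⊆ K := filter_subset _ _
    have hrest : ∏ j ∈ K \ E, p j ∣ P := by
      refine ih _ (sdiff_ssubset hEK ⟨k, mem_filter.2 ⟨hk, .refl _⟩⟩)
        (fun j hj => hp j (sdiff_subset hj)) fun j hj => ?_
      refine (pow_dvd_pow _ (card_le_card ?_)).trans (hP j (sdiff_subset hj))
      exact filter_subset_filter _ sdiff_subset
    have hcoprime : ¬ p k ∣ ∏ j ∈ K \ E, p j := by
      intro h
      obtain ⟨j, hj, hkj⟩ := ((hp k hk).dvd_finsetProd_iff _).1 h
      obtain ⟨hjK, hjE⟩ := mem_sdiff.1 hj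
      exact hjE (mem_filter.2 ⟨hjK, ((hp k hk).associated_of_dvd (hp j hjK) hkj).symm⟩)
    obtain ⟨y, hy⟩ := hrest
    have hEy : ∏ j ∈ E, p j ∣ y := by
      refine (Associated.dvd ?_).trans
        ((hp k hk).pow_dvd_of_dvd_mul_left _ hcoprime (hy ▸ hP k hk))
      rw [← prod_const]
      exact Associated.prod _ _ _ fun j hj => (mem_filter.1 hj).2
    rw [← prod_sdiff hEK, hy]
    exact mul_dvd_mul_left _ hEy

theorem sum_div_eq_of_sum_mul_prod_erase_eq {K ι : Type*} [Field K] [DecidableEq ι]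
    {s : Finset ι} {a b : ι → K} {r : K} (hb : ∀ i ∈ s, b i ≠ 0)
    (h : ∑ i ∈ s, a i * ∏ j ∈ s.erase i, b j = r * ∏ i ∈ s, b i) :
    ∑ i ∈ s, a i / b i = r := by
  rw [← mul_left_inj' (prod_ne_zero_iff.2 hb), ← h, sum_mul]
  refine sum_congr rfl fun i hi => ?_
  rw [← mul_prod_erase s b hi]
  field_simp [hb i hi]

theorem prod_erase_eq_prod_erase_of_eq {M ι : Type*} [CommMonoid M] [DecidableEq ι]
    {s : Finset ι} {f : ι → M} {i j : ι} (hi : i ∈ s) (hj : j ∈ s) (h : f i = f j) :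
    ∏ k ∈ s.erase i, f k = ∏ k ∈ s.erase j, f k := by
  obtain rfl | hij := eq_or_ne i j
  · rfl
  rw [← mul_prod_erase _ f (mem_erase.2 ⟨hij.symm, hj⟩),
    ← mul_prod_erase _ f (mem_erase.2 ⟨hij, hi⟩), erase_right_comm, h]

theorem sum_mul_prod_erase_eq_zero {A ι κ : Type*} [CommSemiring A] [DecidableEq ι]
    [DecidableEq κ] {s : Finset ι} (g : ι → κ) {a x : ι → A}
    (hx : ∀ i ∈ s, ∀ j ∈ s, g i = g j → x i = x j)
    (ha : ∀ i ∈ s, ∑ j ∈ s with g j = g i, a j = 0) :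
    ∑ i ∈ s, a i * ∏ j ∈ s.erase i, x j = 0 := by
  rw [← sum_fiberwise_of_maps_to fun i hi => mem_image_of_mem g hi]
  refine sum_eq_zero fun t ht => ?_
  obtain ⟨i, hi, rfl⟩ := mem_image.1 ht
  calc ∑ j ∈ s with g j = g i, a j * ∏ k ∈ s.erase j, x k
      = ∑ j ∈ s with g j = g i, a j * ∏ k ∈ s.erase i, x k := by
        refine sum_congr rfl fun j hj => ?_
        obtain ⟨hjs, hji⟩ := mem_filter.1 hj
        rw [prod_erase_eq_prod_erase_of_eq hjs hi (hx j hjs i hi hji)]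
    _ = 0 := by rw [← sum_mul, ha i hi, zero_mul]

/-- Clearing denominators in `∑ i ∈ s, a i / χ i` where `β i * χ i = ℓ * χ' i` for `i ∈ t`:
if the residues along `ℓ` cancel, the numerator still has all `#t` factors `ℓ`. -/
theorem pow_card_dvd_prod_mul_sum_mul_prod_erase {A ι : Type*} [CommRing A] [DecidableEq ι]
    {s t : Finset ι} (hts : t ⊆ s) {ℓ : A} {a β χ χ' : ι → A}
    (hχ : ∀ i ∈ t, β i * χ i = ℓ * χ' i)
    (hres : ℓ ∣ ∑ i ∈ t, β i * a i * ∏ j ∈ t.erase i, χ' j) :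
    ℓ ^ #t ∣ (∏ i ∈ t, β i) * ∑ i ∈ s, a i * ∏ j ∈ s.erase i, χ j := by
  obtain rfl | ⟨i₀, hi₀⟩ := t.eq_empty_or_nonempty
  · simp
  have hprod : ∀ u ⊆ t, (∏ i ∈ u, β i) * ∏ i ∈ u, χ i = ℓ ^ #u * ∏ i ∈ u, χ' i := by
    intro u hu
    rw [← prod_mul_distrib, prod_congr rfl fun i hi => hχ i (hu hi), prod_mul_distrib,
      prod_const]
  have hout : ∀ i ∈ s \ t, ℓ ^ #t ∣ (∏ i ∈ t, β i) * (a i * ∏ j ∈ s.erase i, χ j) := by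
    intro i hi
    have hts' : t ⊆ s.erase i := fun j hj =>
      mem_erase.2 ⟨fun h => (mem_sdiff.1 hi).2 (h ▸ hj), hts hj⟩
    have : (∏ i ∈ t, β i) * (a i * ∏ j ∈ s.erase i, χ j)
        = a i * (∏ j ∈ s.erase i \ t, χ j) * ((∏ i ∈ t, β i) * ∏ i ∈ t, χ i) := by
      rw [← prod_sdiff hts']; ring
    rw [this, hprod t subset_rfl]
    exact dvd_mul_of_dvd_right (dvd_mul_right _ _) _
  have hin : (∏ i ∈ t, β i) * ∑ i ∈ t, a i * ∏ j ∈ s.erase i, χ j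
      = ℓ ^ (#t - 1) * (∏ j ∈ s \ t, χ j) * ∑ i ∈ t, β i * a i * ∏ j ∈ t.erase i, χ' j := by
    rw [mul_sum, mul_sum]
    refine sum_congr rfl fun i hi => ?_
    have hsplit : s.erase i \ t.erase i = s \ t := by
      ext j; simp only [mem_sdiff, mem_erase]; constructor
      · rintro ⟨⟨hji, hjs⟩, hjt⟩; exact ⟨hjs, fun h => hjt ⟨hji, h⟩⟩
      · rintro ⟨hjs, hjt⟩; exact ⟨⟨fun h => hjt (h ▸ hi), hjs⟩, fun h => hjt h.2⟩
    rw [← prod_sdiff (erase_subset_erase i hts), hsplit, ← mul_prod_erase t β hi,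
      ← card_erase_of_mem hi]
    linear_combination (β i * a i * ∏ j ∈ s \ t, χ j) * hprod _ (erase_subset i t)
  rw [← sum_sdiff hts, mul_add, hin, mul_sum]
  refine dvd_add (dvd_sum hout) ?_
  rw [← pow_sub_one_mul (card_ne_zero.2 ⟨i₀, hi₀⟩), mul_assoc]
  exact mul_dvd_mul_left _ (dvd_mul_of_dvd_right hres _)

theorem exists_eq_C_mul_of_dvd_of_isHomogeneous {σ R : Type*} [CommRing R] [IsDomain R]
    {p q : MvPolynomial σ R} {n : ℕ} (hp : p.IsHomogeneous n) (hq : q.IsHomogeneous n)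
    (hq0 : q ≠ 0) (h : q ∣ p) : ∃ r, p = C r * q := by
  obtain ⟨g, rfl⟩ := h
  obtain rfl | hg := eq_or_ne g 0
  · exact ⟨0, by simp⟩
  have hdeg := hp.totalDegree_le
  rw [totalDegree_mul_of_isDomain hq0 hg, hq.totalDegree hq0] at hdeg
  exact ⟨coeff 0 g, by rw [mul_comm, ← totalDegree_eq_zero_iff_eq_C.1 (by omega)]⟩

section LinearAlgebra

variable {K n ι : Type*} [Field K] [Fintype n]

theorem dotProduct_eq_zero_of_mem_span {c : n → K} {t : Set (n → K)}
    (hc : ∀ x ∈ t, c ⬝ᵥ x = 0) {x : n → K} (hx : x ∈ Submodule.span K t) : c ⬝ᵥ x = 0 :=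
  (Submodule.span_le (p := LinearMap.ker (dotProductBilin K K c)) |>.2 hc) hx

theorem eq_zero_of_dotProduct_eq_zero_of_span_eq_top {v : ι → n → K} {s : Set ι}
    (hspan : Submodule.span K (v '' s) = ⊤) {c : n → K} (hc : ∀ k ∈ s, c ⬝ᵥ v k = 0) :
    c = 0 := by
  classical
  funext j
  rw [← dotProduct_single_one c j]
  exact dotProduct_eq_zero_of_mem_span (by rintro _ ⟨k, hk, rfl⟩; exact hc k hk)
    (hspan ▸ Submodule.mem_top)

theorem smul_eq_smul_of_dotProduct_eq_zero [DecidableEq ι] {v : ι → n → K} {s : Finset ι}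
    (hspan : Submodule.span K (v '' s) = ⊤) {i : ι} (hi : i ∈ s) {a b : n → K}
    (ha : ∀ k ∈ s.erase i, a ⬝ᵥ v k = 0) (hb : ∀ k ∈ s.erase i, b ⬝ᵥ v k = 0) :
    (b ⬝ᵥ v i) • a = (a ⬝ᵥ v i) • b := by
  rw [← sub_eq_zero]
  refine eq_zero_of_dotProduct_eq_zero_of_span_eq_top hspan fun k hk => ?_
  rw [sub_dotProduct, smul_dotProduct, smul_dotProduct, smul_eq_mul, smul_eq_mul]
  obtain rfl | hki := eq_or_ne k i
  · ring
  · rw [ha k (mem_erase.2 ⟨hki, hk⟩), hb k (mem_erase.2 ⟨hki, hk⟩)]; ring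

end LinearAlgebra

section LinearForm

variable {K n : Type*} [Field K] [Fintype n]

noncomputable def linForm : (n → K) →ₗ[K] MvPolynomial n K where
  toFun a := ∑ j, C (a j) * X j
  map_add' a b := by simp [add_mul, sum_add_distrib]
  map_smul' c a := by simp [smul_eq_C_mul, mul_sum, mul_assoc]

theorem linForm_apply (a : n → K) : linForm a = ∑ j, C (a j) * X j := rfl

theorem eval_linForm (a x : n → K) : eval x (linForm a) = a ⬝ᵥ x := by
  simp [linForm_apply, dotProduct]

theorem coeff_single_linForm [DecidableEq n] (a : n → K) (j : n) :
    coeff (Finsupp.single j 1) (linForm a) = a j := by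
  rw [linForm_apply, coeff_sum, sum_eq_single j]
  · simp
  · intro i _ hij
    rw [coeff_C_mul, coeff_X, if_neg, mul_zero]
    exact fun h => hij (Finsupp.single_left_injective one_ne_zero h)
  · simp

theorem linForm_injective : Function.Injective (linForm : (n → K) → MvPolynomial n K) := by
  classical
  intro a b h
  funext j
  rw [← coeff_single_linForm a, h, coeff_single_linForm]

theorem isHomogeneous_linForm (a : n → K) : (linForm a).IsHomogeneous 1 :=
  IsHomogeneous.sum _ _ _ fun _ _ => isHomogeneous_C_mul_X _ _

theorem prime_linForm {a : n → K} (ha : a ≠ 0) : Prime (linForm a) := by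
  classical
  refine UniqueFactorizationMonoid.irreducible_iff_prime.1 <|
    irreducible_of_totalDegree_eq_one ?_ fun x hx => ?_
  · refine (isHomogeneous_linForm a).totalDegree fun h => ha ?_
    exact linForm_injective (h.trans (map_zero _).symm)
  · obtain ⟨j, hj⟩ := Function.ne_iff.1 ha
    refine (Ne.isUnit fun hx0 => hj ?_)
    simpa [hx0, coeff_single_linForm] using hx (Finsupp.single j 1)

theorem exists_eq_smul_of_associated_linForm {a b : n → K}
    (h : Associated (linForm a) (linForm b)) : ∃ c : K, b = c • a := by
  obtain ⟨u, hu⟩ := h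
  obtain ⟨c, -, hc⟩ := isUnit_iff_eq_C_of_isReduced.1 u.isUnit
  refine ⟨c, linForm_injective ?_⟩
  rw [← hu, hc, map_smul, smul_eq_C_mul, mul_comm]

theorem linForm_dvd_linForm_of_smul_eq_smul {a b : n → K} {x y : K} (hx : x ≠ 0)
    (h : x • a = y • b) : linForm b ∣ linForm a := by
  refine Dvd.intro_left (C (y / x)) ?_
  rw [← smul_eq_C_mul, ← map_smul, div_eq_inv_mul, mul_smul, ← h, smul_smul, inv_mul_cancel₀ hx,
    one_smul]

end LinearForm

section Hyperplane

variable {d N : ℕ} (v : Fin N → Fin d → ℝ) (b : Fin d → ℝ)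

noncomputable def hyperplaneFace (σ : Finset (Fin N)) : Finset (Fin N) :=
  {k ∈ σ | b ⬝ᵥ v k = 0}

noncomputable def conesWithFacetOn (Δ : Finset (Finset (Fin N))) : Finset (Finset (Fin N)) :=
  {σ ∈ Δ | ∃ i ∈ σ, hyperplaneFace v b σ = σ.erase i}

variable {v b} {σ : Finset (Fin N)} {l : Fin N → Fin d → ℝ}

theorem hyperplaneFace_subset : hyperplaneFace v b σ ⊆ σ := filter_subset _ _

theorem hyperplaneFace_ssubset (hspan : Submodule.span ℝ (v '' σ) = ⊤) (hb : b ≠ 0) :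
    hyperplaneFace v b σ ⊂ σ := by
  refine filter_ssubset.2 ?_
  by_contra! h
  exact hb (eq_zero_of_dotProduct_eq_zero_of_span_eq_top hspan h)

theorem dotProduct_ne_zero_of_hyperplaneFace_eq_erase {i : Fin N} (hi : i ∈ σ)
    (h : hyperplaneFace v b σ = σ.erase i) : b ⬝ᵥ v i ≠ 0 :=
  fun h0 => notMem_erase i σ (h ▸ mem_filter.2 ⟨hi, h0⟩)

theorem smul_eq_of_hyperplaneFace_eq_erase (hspan : Submodule.span ℝ (v '' σ) = ⊤)
    (hl : ∀ i ∈ σ, ∀ k ∈ σ, l i ⬝ᵥ v k = if i = k then 1 else 0) {i : Fin N} (hi : i ∈ σ)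
    (h : hyperplaneFace v b σ = σ.erase i) : (b ⬝ᵥ v i) • l i = b := by
  rw [smul_eq_smul_of_dotProduct_eq_zero hspan hi (a := l i) (b := b), hl i hi i hi, if_pos rfl,
    one_smul]
  · intro k hk
    rw [hl i hi k (mem_of_mem_erase hk), if_neg (ne_of_mem_erase hk).symm]
  · intro k hk
    exact (mem_filter.1 (by rwa [h] : k ∈ hyperplaneFace v b σ)).2

theorem hyperplaneFace_eq_erase_of_eq_smul (hb : b ≠ 0)
    (hl : ∀ i ∈ σ, ∀ k ∈ σ, l i ⬝ᵥ v k = if i = k then 1 else 0) {i : Fin N} (hi : i ∈ σ)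
    {c : ℝ} (h : b = c • l i) : hyperplaneFace v b σ = σ.erase i := by
  have hc : c ≠ 0 := by rintro rfl; exact hb (h.trans (zero_smul _ _))
  ext k
  simp only [hyperplaneFace, mem_filter, mem_erase, h, smul_dotProduct, smul_eq_mul]
  constructor
  · rintro ⟨hk, hck⟩
    refine ⟨fun hki => ?_, hk⟩
    rw [hl i hi k hk, if_pos hki.symm, mul_one] at hck
    exact hc hck
  · rintro ⟨hki, hk⟩
    rw [hl i hi k hk, if_neg (Ne.symm hki), mul_zero]
    exact ⟨hk, rfl⟩

end Hyperplane

section Substitution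

variable {d N : ℕ} {L : Finset (Fin N) → Fin N → Fin d → ℝ}

theorem lamPoly_eq_linForm (σ : Finset (Fin N)) (i : Fin N) :
    lamPoly d N L σ i = linForm (L σ i) := rfl

theorem isHomogeneous_lamPoly (σ : Finset (Fin N)) (i : Fin N) :
    (lamPoly d N L σ i).IsHomogeneous 1 :=
  isHomogeneous_linForm _

theorem eval_lamPoly (x : Fin d → ℝ) (σ : Finset (Fin N)) (i : Fin N) :
    eval x (lamPoly d N L σ i) = ∑ j, L σ i j * x j :=
  eval_linForm _ _

theorem isHomogeneous_chiPoly (σ : Finset (Fin N)) : (chiPoly d N L σ).IsHomogeneous #σ := by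
  simpa [chiPoly] using IsHomogeneous.prod σ _ (fun _ => 1) fun i _ =>
    isHomogeneous_lamPoly (L := L) σ i

theorem isHomogeneous_fSigma {f : MvPolynomial (Fin N) ℝ} {n : ℕ} (hf : f.IsHomogeneous n)
    (σ : Finset (Fin N)) : (fSigma d N L f σ).IsHomogeneous n := by
  rw [fSigma, ← one_mul n]
  refine hf.aeval _ fun i => ?_
  split_ifs
  exacts [isHomogeneous_lamPoly _ _, isHomogeneous_zero _ _ _]

theorem eval_chiPoly (x : Fin d → ℝ) (σ : Finset (Fin N)) :
    eval x (chiPoly d N L σ) = ∏ i ∈ σ, ∑ j, L σ i j * x j := by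
  simp only [chiPoly, map_prod, eval_lamPoly]

theorem eval_fSigma (x : Fin d → ℝ) (f : MvPolynomial (Fin N) ℝ) (σ : Finset (Fin N)) :
    eval x (fSigma d N L f σ) = eval (fun i => if i ∈ σ then ∑ j, L σ i j * x j else 0) f := by
  rw [fSigma]
  induction f using MvPolynomial.induction_on with
  | C a => simp
  | add p q hp hq => simp only [map_add, hp, hq]
  | mul_X p i hp =>
    rw [map_mul, map_mul, map_mul, hp, aeval_X, eval_X, apply_ite (eval x), eval_lamPoly, map_zero]

end Substitution

section PoleCancellation

def IsBalanced {d N : ℕ} (Δ : Finset (Finset (Fin N))) (v : Fin N → Fin d → ℝ)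
    (w : Finset (Fin N) → ℝ) : Prop :=
  ∀ τ : Finset (Fin N), #τ + 1 = d → (∃ σ ∈ Δ, τ ⊆ σ) →
    (∑ σ ∈ Δ with τ ⊆ σ, w σ • ∑ k ∈ σ \ τ, v k) ∈ Submodule.span ℝ (v '' τ)

variable {d N : ℕ} {Δ : Finset (Finset (Fin N))} {v : Fin N → Fin d → ℝ}
  {L : Finset (Fin N) → Fin N → Fin d → ℝ} {w : Finset (Fin N) → ℝ} {b : Fin d → ℝ}
  {σ σ' : Finset (Fin N)}

theorem linForm_dvd_lamPoly (hspan : Submodule.span ℝ (v '' σ) = ⊤)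
    (hdual : ∀ i ∈ σ, ∀ k ∈ σ, L σ i ⬝ᵥ v k = if i = k then 1 else 0) {i : Fin N}
    (hi : i ∈ σ) (h : hyperplaneFace v b σ = σ.erase i) : linForm b ∣ lamPoly d N L σ i :=
  linForm_dvd_linForm_of_smul_eq_smul (dotProduct_ne_zero_of_hyperplaneFace_eq_erase hi h)
    ((smul_eq_of_hyperplaneFace_eq_erase hspan hdual hi h).trans (one_smul _ _).symm)

theorem linForm_dvd_lamPoly_sub (hspan : Submodule.span ℝ (v '' σ) = ⊤)
    (hdual : ∀ i ∈ σ, ∀ k ∈ σ, L σ i ⬝ᵥ v k = if i = k then 1 else 0)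
    (hdual' : ∀ i ∈ σ', ∀ k ∈ σ', L σ' i ⬝ᵥ v k = if i = k then 1 else 0) {i : Fin N}
    (hi : i ∈ σ) (h : hyperplaneFace v b σ = σ.erase i)
    (hface : hyperplaneFace v b σ = hyperplaneFace v b σ') {j : Fin N}
    (hj : j ∈ hyperplaneFace v b σ) :
    linForm b ∣ lamPoly d N L σ j - lamPoly d N L σ' j := by
  have hσ' : ∀ k ∈ hyperplaneFace v b σ, k ∈ σ' := fun k hk =>
    hyperplaneFace_subset (hface ▸ hk)
  rw [lamPoly_eq_linForm, lamPoly_eq_linForm, ← map_sub]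
  rw [h] at hj hσ'
  refine linForm_dvd_linForm_of_smul_eq_smul (dotProduct_ne_zero_of_hyperplaneFace_eq_erase hi h)
    (smul_eq_smul_of_dotProduct_eq_zero hspan hi (fun k hk => ?_) fun k hk => ?_)
  · rw [sub_dotProduct, hdual j (mem_of_mem_erase hj) k (mem_of_mem_erase hk),
      hdual' j (hσ' j hj) k (hσ' k hk), sub_self]
  · exact (mem_filter.1 (by rwa [h] : k ∈ hyperplaneFace v b σ)).2

theorem mk_ite_lamPoly_eq_zero (hspan : ∀ σ ∈ Δ, Submodule.span ℝ (v '' σ) = ⊤)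
    (hdual : ∀ σ ∈ Δ, ∀ i ∈ σ, ∀ k ∈ σ, L σ i ⬝ᵥ v k = if i = k then 1 else 0)
    (hσ : σ ∈ conesWithFacetOn v b Δ) {k : Fin N} (hk : k ∉ hyperplaneFace v b σ) :
    Ideal.Quotient.mk (Ideal.span {linForm b}) (if k ∈ σ then lamPoly d N L σ k else 0) = 0 := by
  obtain ⟨hσΔ, i, hi, h⟩ := mem_filter.1 hσ
  split_ifs with hkσ
  · obtain rfl : k = i := by
      by_contra hki
      exact hk (h ▸ mem_erase.2 ⟨hki, hkσ⟩)
    exact Ideal.Quotient.eq_zero_iff_mem.2 <| Ideal.mem_span_singleton.2 <|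
      linForm_dvd_lamPoly (hspan σ hσΔ) (hdual σ hσΔ) hi h
  · exact map_zero _

theorem mk_lamPoly_eq (hspan : ∀ σ ∈ Δ, Submodule.span ℝ (v '' σ) = ⊤)
    (hdual : ∀ σ ∈ Δ, ∀ i ∈ σ, ∀ k ∈ σ, L σ i ⬝ᵥ v k = if i = k then 1 else 0)
    (hσ : σ ∈ conesWithFacetOn v b Δ) (hσ' : σ' ∈ conesWithFacetOn v b Δ)
    (hface : hyperplaneFace v b σ = hyperplaneFace v b σ') {j : Fin N}
    (hj : j ∈ hyperplaneFace v b σ) :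
    Ideal.Quotient.mk (Ideal.span {linForm b}) (lamPoly d N L σ j)
      = Ideal.Quotient.mk (Ideal.span {linForm b}) (lamPoly d N L σ' j) := by
  obtain ⟨hσΔ, i, hi, h⟩ := mem_filter.1 hσ
  exact Ideal.Quotient.eq.2 <| Ideal.mem_span_singleton.2 <| linForm_dvd_lamPoly_sub
    (hspan σ hσΔ) (hdual σ hσΔ) (hdual σ' (mem_filter.1 hσ').1) hi h hface hj

theorem mk_fSigma_eq (hspan : ∀ σ ∈ Δ, Submodule.span ℝ (v '' σ) = ⊤)
    (hdual : ∀ σ ∈ Δ, ∀ i ∈ σ, ∀ k ∈ σ, L σ i ⬝ᵥ v k = if i = k then 1 else 0)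
    (hσ : σ ∈ conesWithFacetOn v b Δ) (hσ' : σ' ∈ conesWithFacetOn v b Δ)
    (hface : hyperplaneFace v b σ = hyperplaneFace v b σ') (f : MvPolynomial (Fin N) ℝ) :
    Ideal.Quotient.mk (Ideal.span {linForm b}) (fSigma d N L f σ)
      = Ideal.Quotient.mk (Ideal.span {linForm b}) (fSigma d N L f σ') := by
  rw [fSigma, fSigma, ← Ideal.Quotient.mkₐ_eq_mk ℝ, comp_aeval_apply, comp_aeval_apply]
  congr 2 with k
  by_cases hk : k ∈ hyperplaneFace v b σ
  · rw [if_pos (hyperplaneFace_subset hk), if_pos (hyperplaneFace_subset (hface ▸ hk))]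
    exact mk_lamPoly_eq hspan hdual hσ hσ' hface hk
  · rw [Ideal.Quotient.mkₐ_eq_mk, mk_ite_lamPoly_eq_zero hspan hdual hσ hk,
      mk_ite_lamPoly_eq_zero hspan hdual hσ' (hface ▸ hk)]

theorem mk_prod_lamPoly_hyperplaneFace_eq (hspan : ∀ σ ∈ Δ, Submodule.span ℝ (v '' σ) = ⊤)
    (hdual : ∀ σ ∈ Δ, ∀ i ∈ σ, ∀ k ∈ σ, L σ i ⬝ᵥ v k = if i = k then 1 else 0)
    (hσ : σ ∈ conesWithFacetOn v b Δ) (hσ' : σ' ∈ conesWithFacetOn v b Δ)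
    (hface : hyperplaneFace v b σ = hyperplaneFace v b σ') :
    ∏ j ∈ hyperplaneFace v b σ, Ideal.Quotient.mk (Ideal.span {linForm b}) (lamPoly d N L σ j)
      = ∏ j ∈ hyperplaneFace v b σ',
          Ideal.Quotient.mk (Ideal.span {linForm b}) (lamPoly d N L σ' j) := by
  rw [← hface]
  exact prod_congr rfl fun j hj => mk_lamPoly_eq hspan hdual hσ hσ' hface hj

theorem filter_hyperplaneFace_eq (hcard : ∀ σ ∈ Δ, #σ = d)
    (hspan : ∀ σ ∈ Δ, Submodule.span ℝ (v '' σ) = ⊤) (hb : b ≠ 0)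
    (hσ : σ ∈ conesWithFacetOn v b Δ) :
    {σ' ∈ conesWithFacetOn v b Δ | hyperplaneFace v b σ' = hyperplaneFace v b σ}
      = {σ' ∈ Δ | hyperplaneFace v b σ ⊆ σ'} := by
  obtain ⟨hσΔ, i, hi, h⟩ := mem_filter.1 hσ
  ext σ'
  simp only [conesWithFacetOn, mem_filter]
  constructor
  · rintro ⟨⟨hσ'Δ, -⟩, hface⟩
    exact ⟨hσ'Δ, hface ▸ hyperplaneFace_subset⟩
  · rintro ⟨hσ'Δ, hsub⟩
    set τ := hyperplaneFace v b σ
    have hτ : #τ + 1 = d := by rw [h, card_erase_add_one hi, hcard σ hσΔ]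
    have hτface : τ ⊆ hyperplaneFace v b σ' := fun k hk =>
      mem_filter.2 ⟨hsub hk, (mem_filter.1 hk).2⟩
    have hface : hyperplaneFace v b σ' = τ := by
      refine (eq_of_subset_of_card_le hτface ?_).symm
      have := card_lt_card (hyperplaneFace_ssubset (hspan σ' hσ'Δ) hb)
      rw [hcard σ' hσ'Δ] at this
      omega
    obtain ⟨i', hi'⟩ := card_eq_one.1 (show #(σ' \ τ) = 1 by
      rw [card_sdiff_of_subset hsub, hcard σ' hσ'Δ]; omega)
    refine ⟨⟨hσ'Δ, i', (mem_sdiff.1 (hi' ▸ mem_singleton_self i')).1, ?_⟩, hface⟩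
    rw [hface, ← sdiff_singleton_eq_erase, ← hi', Finset.sdiff_sdiff_eq_self hsub]

theorem sum_mul_dotProduct_sdiff_hyperplaneFace_eq_zero (hcard : ∀ σ ∈ Δ, #σ = d)
    (hspan : ∀ σ ∈ Δ, Submodule.span ℝ (v '' σ) = ⊤) (hbal : IsBalanced Δ v w)
    (hb : b ≠ 0) (hσ : σ ∈ conesWithFacetOn v b Δ) :
    ∑ σ' ∈ conesWithFacetOn v b Δ with hyperplaneFace v b σ' = hyperplaneFace v b σ,
      w σ' * (b ⬝ᵥ ∑ k ∈ σ' \ hyperplaneFace v b σ', v k) = 0 := by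
  obtain ⟨hσΔ, i, hi, h⟩ := mem_filter.1 hσ
  rw [sum_congr rfl fun σ' hσ' => by rw [(mem_filter.1 hσ').2],
    filter_hyperplaneFace_eq hcard hspan hb hσ]
  have hbal' := hbal _ (by rw [h, card_erase_add_one hi, hcard σ hσΔ])
    ⟨σ, hσΔ, hyperplaneFace_subset⟩
  have := dotProduct_eq_zero_of_mem_span (c := b)
    (by rintro _ ⟨k, hk, rfl⟩; exact (mem_filter.1 hk).2) hbal'
  simpa only [dotProduct_sum, dotProduct_smul, smul_eq_mul] using this

theorem linForm_dvd_sum_mul_prod_erase (hcard : ∀ σ ∈ Δ, #σ = d)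
    (hspan : ∀ σ ∈ Δ, Submodule.span ℝ (v '' σ) = ⊤)
    (hdual : ∀ σ ∈ Δ, ∀ i ∈ σ, ∀ k ∈ σ, L σ i ⬝ᵥ v k = if i = k then 1 else 0)
    (hbal : IsBalanced Δ v w) (hb : b ≠ 0) (f : MvPolynomial (Fin N) ℝ) :
    linForm b ∣ ∑ σ ∈ conesWithFacetOn v b Δ,
      C (b ⬝ᵥ ∑ k ∈ σ \ hyperplaneFace v b σ, v k) * (C (w σ) * fSigma d N L f σ) *
        ∏ σ' ∈ (conesWithFacetOn v b Δ).erase σ,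
          ∏ j ∈ hyperplaneFace v b σ', lamPoly d N L σ' j := by
  rw [← Ideal.mem_span_singleton, ← Ideal.Quotient.eq_zero_iff_mem]
  simp only [map_sum, map_mul, map_prod]
  refine sum_mul_prod_erase_eq_zero (hyperplaneFace v b)
    (fun σ hσ σ' hσ' hface => mk_prod_lamPoly_hyperplaneFace_eq hspan hdual hσ hσ' hface)
    fun σ hσ => ?_
  rw [sum_congr rfl fun σ' hσ' => by
      rw [mk_fSigma_eq hspan hdual (mem_filter.1 hσ').1 hσ (mem_filter.1 hσ').2, ← mul_assoc,
        ← map_mul, ← C_mul, mul_comm (b ⬝ᵥ _)],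
    ← sum_mul, ← map_sum, ← map_sum,
    sum_mul_dotProduct_sdiff_hyperplaneFace_eq_zero hcard hspan hbal hb hσ, map_zero, map_zero,
    zero_mul]

theorem C_mul_chiPoly_eq (hspan : ∀ σ ∈ Δ, Submodule.span ℝ (v '' σ) = ⊤)
    (hdual : ∀ σ ∈ Δ, ∀ i ∈ σ, ∀ k ∈ σ, L σ i ⬝ᵥ v k = if i = k then 1 else 0)
    (hσ : σ ∈ conesWithFacetOn v b Δ) :
    C (b ⬝ᵥ ∑ k ∈ σ \ hyperplaneFace v b σ, v k) * chiPoly d N L σ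
      = linForm b * ∏ j ∈ hyperplaneFace v b σ, lamPoly d N L σ j := by
  obtain ⟨hσΔ, i, hi, h⟩ := mem_filter.1 hσ
  have hℓ : linForm b = C (b ⬝ᵥ v i) * lamPoly d N L σ i := by
    conv_lhs => rw [← smul_eq_of_hyperplaneFace_eq_erase (hspan σ hσΔ) (hdual σ hσΔ) hi h]
    rw [map_smul, smul_eq_C_mul, lamPoly_eq_linForm]
  rw [hℓ, h, sdiff_erase_self hi, sum_singleton, chiPoly, ← mul_prod_erase σ _ hi, mul_assoc]

theorem linForm_pow_card_dvd (hcard : ∀ σ ∈ Δ, #σ = d)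
    (hspan : ∀ σ ∈ Δ, Submodule.span ℝ (v '' σ) = ⊤)
    (hdual : ∀ σ ∈ Δ, ∀ i ∈ σ, ∀ k ∈ σ, L σ i ⬝ᵥ v k = if i = k then 1 else 0)
    (hbal : IsBalanced Δ v w) (hb : b ≠ 0) (f : MvPolynomial (Fin N) ℝ) :
    linForm b ^ #(conesWithFacetOn v b Δ) ∣
      ∑ σ ∈ Δ, C (w σ) * fSigma d N L f σ * ∏ σ' ∈ Δ.erase σ, chiPoly d N L σ' := by
  have hunit : IsUnit (∏ σ ∈ conesWithFacetOn v b Δ,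
      C (b ⬝ᵥ ∑ k ∈ σ \ hyperplaneFace v b σ, v k) : MvPolynomial (Fin d) ℝ) := by
    refine IsUnit.prod_iff.2 fun σ hσ => ?_
    obtain ⟨-, i, hi, h⟩ := mem_filter.1 hσ
    rw [h, sdiff_erase_self hi, sum_singleton]
    exact (Ne.isUnit (dotProduct_ne_zero_of_hyperplaneFace_eq_erase hi h)).map C
  exact hunit.dvd_mul_left.1 <| pow_card_dvd_prod_mul_sum_mul_prod_erase (filter_subset _ Δ)
    (fun σ hσ => C_mul_chiPoly_eq hspan hdual hσ)
    (linForm_dvd_sum_mul_prod_erase hcard hspan hdual hbal hb f)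

open scoped Classical in
theorem card_filter_associated_le
    (hdual : ∀ σ ∈ Δ, ∀ i ∈ σ, ∀ k ∈ σ, L σ i ⬝ᵥ v k = if i = k then 1 else 0) (hb : b ≠ 0) :
    #{x ∈ Δ.sigma id | Associated (lamPoly d N L x.1 x.2) (linForm b)}
      ≤ #(conesWithFacetOn v b Δ) := by
  have hface : ∀ x ∈ {x ∈ Δ.sigma id | Associated (lamPoly d N L x.1 x.2) (linForm b)},
      x.1 ∈ Δ ∧ x.2 ∈ x.1 ∧ hyperplaneFace v b x.1 = x.1.erase x.2 := by
    rintro ⟨σ, i⟩ hx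
    obtain ⟨hx, hassoc⟩ := mem_filter.1 hx
    obtain ⟨hσ, hi⟩ := mem_sigma.1 hx
    obtain ⟨c, hc⟩ := exists_eq_smul_of_associated_linForm hassoc
    exact ⟨hσ, hi, hyperplaneFace_eq_erase_of_eq_smul hb (hdual σ hσ) hi hc⟩
  refine card_le_card_of_injOn Sigma.fst (fun x hx => ?_) fun x hx y hy hxy => ?_
  · obtain ⟨hσ, hi, h⟩ := hface x hx
    exact mem_filter.2 ⟨hσ, x.2, hi, h⟩
  · obtain ⟨σ, i⟩ := x
    obtain ⟨σ', i'⟩ := y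
    obtain rfl : σ = σ' := hxy
    obtain ⟨-, hi, h⟩ := hface _ hx
    obtain ⟨-, -, h'⟩ := hface _ hy
    obtain rfl : i = i' := (erase_inj σ hi).1 (h.symm.trans h')
    rfl

theorem prod_chiPoly_dvd (hcard : ∀ σ ∈ Δ, #σ = d)
    (hspan : ∀ σ ∈ Δ, Submodule.span ℝ (v '' σ) = ⊤)
    (hdual : ∀ σ ∈ Δ, ∀ i ∈ σ, ∀ k ∈ σ, L σ i ⬝ᵥ v k = if i = k then 1 else 0)
    (hbal : IsBalanced Δ v w) (f : MvPolynomial (Fin N) ℝ) :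
    ∏ σ ∈ Δ, chiPoly d N L σ ∣
      ∑ σ ∈ Δ, C (w σ) * fSigma d N L f σ * ∏ σ' ∈ Δ.erase σ, chiPoly d N L σ' := by
  have hL : ∀ x ∈ Δ.sigma id, L x.1 x.2 ≠ 0 := fun x hx h0 => by
    obtain ⟨hσ, hi⟩ := mem_sigma.1 hx
    simpa [h0] using hdual _ hσ _ hi _ hi
  rw [show ∏ σ ∈ Δ, chiPoly d N L σ = ∏ x ∈ Δ.sigma id, lamPoly d N L x.1 x.2 from
    (prod_sigma Δ id fun x => lamPoly d N L x.1 x.2).symm]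
  refine prod_dvd_of_forall_pow_card_associated_dvd _ (fun x hx => prime_linForm (hL x hx))
    fun x hx => ?_
  exact (pow_dvd_pow _ (card_filter_associated_le hdual (hL x hx))).trans
    (linForm_pow_card_dvd hcard hspan hdual hbal (hL x hx) f)

theorem exists_sum_mul_prod_erase_eq_C_mul (hcard : ∀ σ ∈ Δ, #σ = d)
    (hspan : ∀ σ ∈ Δ, Submodule.span ℝ (v '' σ) = ⊤)
    (hdual : ∀ σ ∈ Δ, ∀ i ∈ σ, ∀ k ∈ σ, L σ i ⬝ᵥ v k = if i = k then 1 else 0)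
    (hbal : IsBalanced Δ v w) {f : MvPolynomial (Fin N) ℝ} (hf : f.IsHomogeneous d)
    (hχ : ∀ σ ∈ Δ, chiPoly d N L σ ≠ 0) :
    ∃ r, ∑ σ ∈ Δ, C (w σ) * fSigma d N L f σ * ∏ σ' ∈ Δ.erase σ, chiPoly d N L σ'
      = C r * ∏ σ ∈ Δ, chiPoly d N L σ := by
  have hχd : ∀ σ ∈ Δ, (chiPoly d N L σ).IsHomogeneous d := fun σ hσ =>
    hcard σ hσ ▸ isHomogeneous_chiPoly (L := L) σ
  refine exists_eq_C_mul_of_dvd_of_isHomogeneous (n := ∑ _σ ∈ Δ, d)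
    (IsHomogeneous.sum _ _ _ fun σ hσ => ?_) (IsHomogeneous.prod _ _ _ hχd)
    (prod_ne_zero_iff.2 hχ) (prod_chiPoly_dvd hcard hspan hdual hbal f)
  rw [← add_sum_erase Δ (fun _ => d) hσ]
  exact ((isHomogeneous_fSigma hf σ).C_mul (w σ)).mul
    (IsHomogeneous.prod _ _ _ fun σ' hσ' => hχd σ' (mem_of_mem_erase hσ'))

end PoleCancellation

theorem stmt2_general (d N : ℕ)
    (Δd : Finset (Finset (Fin N))) (hcard : ∀ σ ∈ Δd, σ.card = d)
    (v : Fin N → Fin d → ℝ)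
    (hbasis : ∀ σ ∈ Δd, LinearIndependent ℝ (fun k : {x : Fin N // x ∈ σ} => v k) ∧
      Submodule.span ℝ (v '' ↑σ) = ⊤)
    (L : Finset (Fin N) → Fin N → Fin d → ℝ)
    (hdual : ∀ σ ∈ Δd, ∀ i ∈ σ, ∀ k ∈ σ,
      (∑ j, L σ i j * v k j) = if i = k then 1 else 0)
    (w : Finset (Fin N) → ℝ)
    (hbal : ∀ τ : Finset (Fin N), τ.card + 1 = d → (∃ σ ∈ Δd, τ ⊆ σ) →
      (∑ σ ∈ Δd.filter (fun σ => τ ⊆ σ), w σ • ∑ k ∈ σ \ τ, v k)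
        ∈ Submodule.span ℝ (v '' ↑τ))
    (f : MvPolynomial (Fin N) ℝ) (hf : f.IsHomogeneous d)
    (v₀ : Fin d → ℝ)
    (hX : ∀ σ ∈ Δd, ∀ i ∈ σ, (∑ j, L σ i j * v₀ j) ≠ 0) :
    ∑ σ ∈ Δd,
        algebraMap (MvPolynomial (Fin d) ℝ) (FractionRing (MvPolynomial (Fin d) ℝ))
            (C (w σ) * fSigma d N L f σ) /
          algebraMap (MvPolynomial (Fin d) ℝ) (FractionRing (MvPolynomial (Fin d) ℝ))
            (chiPoly d N L σ)
      = algebraMap (MvPolynomial (Fin d) ℝ) (FractionRing (MvPolynomial (Fin d) ℝ))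
          (C (∑ σ ∈ Δd,
            w σ * eval (fun i : Fin N => if i ∈ σ then ∑ j, L σ i j * v₀ j else 0) f /
              ∏ i ∈ σ, ∑ j, L σ i j * v₀ j)) := by
  have hχ : ∀ σ ∈ Δd, eval v₀ (chiPoly d N L σ) ≠ 0 := fun σ hσ => by
    rw [eval_chiPoly]
    exact prod_ne_zero_iff.2 (hX σ hσ)
  obtain ⟨r, hr⟩ := exists_sum_mul_prod_erase_eq_C_mul hcard (fun σ hσ => (hbasis σ hσ).2) hdual
    hbal hf fun σ hσ h0 => hχ σ hσ (by rw [h0, map_zero])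
  have hvalue : ∑ σ ∈ Δd,
      w σ * eval (fun i : Fin N => if i ∈ σ then ∑ j, L σ i j * v₀ j else 0) f /
        ∏ i ∈ σ, ∑ j, L σ i j * v₀ j = r := by
    refine sum_div_eq_of_sum_mul_prod_erase_eq (fun σ hσ => prod_ne_zero_iff.2 (hX σ hσ)) ?_
    simpa only [map_sum, map_mul, map_prod, eval_C, eval_fSigma, eval_chiPoly]
      using congrArg (eval v₀) hr
  rw [hvalue]
  refine sum_div_eq_of_sum_mul_prod_erase_eq (fun σ hσ => ?_) ?_
  · exact (map_ne_zero_iff _ (IsFractionRing.injective _ _)).2 fun h0 =>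
      hχ σ hσ (by rw [h0, map_zero])
  · simpa only [map_sum, map_mul, map_prod] using congrArg
      (algebraMap (MvPolynomial (Fin d) ℝ) (FractionRing (MvPolynomial (Fin d) ℝ))) hr

/-- for balanced `w`, homogeneous `f` of degree `d`, and a general vector
`v_0` (all `X_i^σ = λ_{σ,i}(v_0) ≠ 0`), the rational function `Σ_σ w_σ f_σ/χ_σ` is the
constant polynomial with value `Σ_σ w_σ · f(X^σ)/∏_{i∈σ} X_i^σ`. -/
theorem stmt2 (d N : ℕ) (hd : 1 ≤ d) (hN : 1 ≤ N)
    (Δd : Finset (Finset (Fin N))) (hcard : ∀ σ ∈ Δd, σ.card = d)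
    (v : Fin N → Fin d → ℝ)
    (hbasis : ∀ σ ∈ Δd, LinearIndependent ℝ (fun k : {x : Fin N // x ∈ σ} => v k) ∧
      Submodule.span ℝ (v '' ↑σ) = ⊤)
    (L : Finset (Fin N) → Fin N → Fin d → ℝ)
    (hdual : ∀ σ ∈ Δd, ∀ i ∈ σ, ∀ k ∈ σ,
      (∑ j, L σ i j * v k j) = if i = k then 1 else 0)
    (w : Finset (Fin N) → ℝ)
    (hbal : ∀ τ : Finset (Fin N), τ.card + 1 = d → (∃ σ ∈ Δd, τ ⊆ σ) →
      (∑ σ ∈ Δd.filter (fun σ => τ ⊆ σ), w σ • ∑ k ∈ σ \ τ, v k)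
        ∈ Submodule.span ℝ (v '' ↑τ))
    (f : MvPolynomial (Fin N) ℝ) (hf : f.IsHomogeneous d)
    (v₀ : Fin d → ℝ)
    (hX : ∀ σ ∈ Δd, ∀ i ∈ σ, (∑ j, L σ i j * v₀ j) ≠ 0) :
    ∑ σ ∈ Δd,
        algebraMap (MvPolynomial (Fin d) ℝ) (FractionRing (MvPolynomial (Fin d) ℝ))
            (C (w σ) * fSigma d N L f σ) /
          algebraMap (MvPolynomial (Fin d) ℝ) (FractionRing (MvPolynomial (Fin d) ℝ))
            (chiPoly d N L σ)
      = algebraMap (MvPolynomial (Fin d) ℝ) (FractionRing (MvPolynomial (Fin d) ℝ))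
          (C (∑ σ ∈ Δd,
            w σ * eval (fun i : Fin N => if i ∈ σ then ∑ j, L σ i j * v₀ j else 0) f /
              ∏ i ∈ σ, ∑ j, L σ i j * v₀ j)) :=
  stmt2_general d N Δd hcard v hbasis L hdual w hbal f hf v₀ hX
end

section
/- Let Δ be a finite abstract simplicial complex on the vertex set {1,…,N}, let I_Δ ⊆ ℝ[∂_1,…,∂_N] be the ideal generated by the monomials ∏_{k∈S} ∂_k over subsets S ∉ Δ, and set 𝒜 = ℝ[∂_1,…,∂_N]/I_Δ. Let Θ′ ⊆ Θ ⊆ ℝ[∂_1,…,∂_N]_1 be linear subspaces of linear forms such that Θ′ satisfies: for every face σ ∈ Δ and every i ∈ σ there exists l ∈ Θ′ whose coefficient at ∂_i equals 1 and whose coefficient at ∂_k equals 0 for every k ∈ σ∖{i}. Then the ℝ-subspace Θ·𝒜 of 𝒜 is spanned by Θ′·𝒜 together with the elements l·∂_τ, where τ ranges over the faces of Δ, ∂_τ = ∏_{k∈τ} ∂_k, and l ranges over the elements of Θ whose coefficient at ∂_k is 0 for every k ∈ τ. -/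
/-!
Fix `u ∈ Θ` and a monomial `∂^a` with support a face `τ` (otherwise `u·∂^a = 0` in `𝒜`).
Subtracting a combination of the forms `l_i ∈ Θ′` dual to `τ` makes `u` vanish on `τ`, which
settles the squarefree case `∂^a = ∂_τ`. If `a_j ≥ 2`, write `∂^a = ∂_j ∂^b`; the form `l ∈ Θ′`
dual to `j` on `τ` gives `∂_j = l - ∑_{k ∉ τ} l_k ∂_k`, so `u·∂^a ≡ -∑_{k ∉ τ} l_k u·∂_k ∂^b`
modulo `Θ′·𝒜`, and each `∂_k ∂^b` has the strictly larger support `τ ∪ {k}`. Induction on the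
support, which can only grow finitely often, finishes the proof.
-/

open MvPolynomial

/-- The Stanley–Reisner ideal `I_Δ`, generated by the monomials `∏_{k∈S} ∂_k`
over non-faces `S ∉ Δ`. -/
noncomputable def srIdeal (N : ℕ) (Δ : Finset (Finset (Fin N))) :
    Ideal (MvPolynomial (Fin N) ℝ) :=
  Ideal.span {p | ∃ S : Finset (Fin N), S ∉ Δ ∧ p = ∏ k ∈ S, X k}

/-- For a subspace `U` of linear forms, the `ℝ`-span `U·𝒜` of all products `u·r`
inside the Stanley-Reisner ring `𝒜 = ℝ[∂_1,…,∂_N]/I_Δ`. -/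
noncomputable def mulSpan (N : ℕ) (Δ : Finset (Finset (Fin N)))
    (U : Submodule ℝ (MvPolynomial (Fin N) ℝ)) :
    Submodule ℝ (MvPolynomial (Fin N) ℝ ⧸ srIdeal N Δ) :=
  Submodule.span ℝ
    {x | ∃ u ∈ U, ∃ r : MvPolynomial (Fin N) ℝ, x = Ideal.Quotient.mk (srIdeal N Δ) (u * r)}

namespace MvPolynomial

variable {σ R : Type*} [CommSemiring R]

theorem IsHomogeneous.eq_sum_coeff_single_smul_X [Fintype σ] {p : MvPolynomial σ R}
    (hp : p.IsHomogeneous 1) : p = ∑ k, coeff (Finsupp.single k 1) p • X k := by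
  have hspan : p ∈ homogeneousSubmodule σ R 1 := hp
  rw [homogeneousSubmodule_one_eq_span_X, Submodule.mem_span_range_iff_exists_fun] at hspan
  obtain ⟨c, rfl⟩ := hspan
  classical
  simp [coeff_sum, coeff_X, Finsupp.single_left_inj]

theorem IsHomogeneous.eq_X_add_sum_compl [Fintype σ] [DecidableEq σ] {l : MvPolynomial σ R}
    (hl : l.IsHomogeneous 1) {τ : Finset σ} {j : σ} (hj : j ∈ τ)
    (hlj : coeff (Finsupp.single j 1) l = 1)
    (hl0 : ∀ k ∈ τ, k ≠ j → coeff (Finsupp.single k 1) l = 0) :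
    l = X j + ∑ k ∈ τᶜ, coeff (Finsupp.single k 1) l • X k := by
  conv_lhs => rw [hl.eq_sum_coeff_single_smul_X, ← Finset.sum_add_sum_compl τ]
  rw [Finset.sum_eq_single_of_mem j hj fun k hk hkj => by rw [hl0 k hk hkj, zero_smul], hlj,
    one_smul]

theorem monomial_one_eq_prod_X {a : σ →₀ ℕ} (ha : ∀ k ∈ a.support, a k = 1) :
    monomial a (1 : R) = ∏ k ∈ a.support, X k := by
  rw [← prod_X_pow_eq_monomial]
  exact Finset.prod_congr rfl fun k hk => by rw [ha k hk, pow_one]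

theorem prod_X_support_dvd_monomial (a : σ →₀ ℕ) :
    (∏ k ∈ a.support, X k : MvPolynomial σ R) ∣ monomial a 1 := by
  rw [← prod_X_pow_eq_monomial]
  exact Finset.prod_dvd_prod_of_dvd _ _ fun k hk => dvd_pow_self _ (Finsupp.mem_support_iff.1 hk)

theorem exists_mem_coeff_single_eq_of_dual {Θ : Submodule R (MvPolynomial σ R)} {τ : Finset σ}
    (hΘ : ∀ i ∈ τ, ∃ l ∈ Θ, coeff (Finsupp.single i 1) l = 1 ∧
      ∀ k ∈ τ, k ≠ i → coeff (Finsupp.single k 1) l = 0) (p : MvPolynomial σ R) :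
    ∃ v ∈ Θ, ∀ k ∈ τ, coeff (Finsupp.single k 1) v = coeff (Finsupp.single k 1) p := by
  choose! l hlΘ hl1 hl0 using hΘ
  refine ⟨∑ i ∈ τ, coeff (Finsupp.single i 1) p • l i,
    Submodule.sum_mem _ fun i hi => Θ.smul_mem _ (hlΘ i hi), fun k hk => ?_⟩
  rw [coeff_sum, Finset.sum_eq_single_of_mem k hk, coeff_smul, hl1 k hk, smul_eq_mul, mul_one]
  intro i hi hik
  rw [coeff_smul, hl0 i hi k hk (Ne.symm hik), smul_zero]

end MvPolynomial

theorem Finsupp.support_ssubset_support_single_add {σ : Type*} {b : σ →₀ ℕ} {k : σ}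
    (hk : k ∉ b.support) : b.support ⊂ (Finsupp.single k 1 + b).support := by
  classical
  rw [Finsupp.support_add_eq, Finsupp.support_single _ one_ne_zero,
    Finset.singleton_union]
  · exact Finset.ssubset_insert hk
  · rwa [Finsupp.support_single _ one_ne_zero, Finset.disjoint_singleton_left]

section StanleyReisner

variable {N : ℕ} {Δ : Finset (Finset (Fin N))}

theorem monomial_mem_srIdeal {a : Fin N →₀ ℕ} (ha : a.support ∉ Δ) :
    monomial a 1 ∈ srIdeal N Δ :=
  Ideal.mem_of_dvd _ (prod_X_support_dvd_monomial a) (Ideal.subset_span ⟨a.support, ha, rfl⟩)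

theorem mk_smul_srIdeal (c : ℝ) (p : MvPolynomial (Fin N) ℝ) :
    Ideal.Quotient.mk (srIdeal N Δ) (c • p) = c • Ideal.Quotient.mk (srIdeal N Δ) p :=
  map_smul (Ideal.Quotient.mkₐ ℝ _) c p

theorem mk_mul_mem_mulSpan {U : Submodule ℝ (MvPolynomial (Fin N) ℝ)} {u : MvPolynomial (Fin N) ℝ}
    (hu : u ∈ U) (r : MvPolynomial (Fin N) ℝ) :
    Ideal.Quotient.mk (srIdeal N Δ) (u * r) ∈ mulSpan N Δ U :=
  Submodule.subset_span ⟨u, hu, r, rfl⟩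

theorem mulSpan_mono {U V : Submodule ℝ (MvPolynomial (Fin N) ℝ)} (h : U ≤ V) :
    mulSpan N Δ U ≤ mulSpan N Δ V :=
  Submodule.span_le.2 <| by
    rintro _ ⟨u, hu, r, rfl⟩
    exact mk_mul_mem_mulSpan (h hu) r

variable (N Δ) in
noncomputable def faceSpan (Θ : Submodule ℝ (MvPolynomial (Fin N) ℝ)) :
    Submodule ℝ (MvPolynomial (Fin N) ℝ ⧸ srIdeal N Δ) :=
  Submodule.span ℝ
    {x : MvPolynomial (Fin N) ℝ ⧸ srIdeal N Δ |
      ∃ τ ∈ Δ, ∃ l ∈ Θ, (∀ k ∈ τ, coeff (Finsupp.single k 1) l = 0) ∧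
        x = Ideal.Quotient.mk (srIdeal N Δ) (l * ∏ k ∈ τ, X k)}

theorem faceSpan_le_mulSpan (Θ : Submodule ℝ (MvPolynomial (Fin N) ℝ)) :
    faceSpan N Δ Θ ≤ mulSpan N Δ Θ :=
  Submodule.span_le.2 <| by
    rintro _ ⟨τ, -, l, hl, -, rfl⟩
    exact mk_mul_mem_mulSpan hl _

variable {Θ Θ' : Submodule ℝ (MvPolynomial (Fin N) ℝ)}
  (hΘ' : ∀ σ ∈ Δ, ∀ i ∈ σ, ∃ l ∈ Θ',
    coeff (Finsupp.single i 1) l = 1 ∧ ∀ k ∈ σ, k ≠ i → coeff (Finsupp.single k 1) l = 0)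
include hΘ'

theorem mk_mul_prod_X_mem (hsub : Θ' ≤ Θ) {τ : Finset (Fin N)} (hτ : τ ∈ Δ)
    {u : MvPolynomial (Fin N) ℝ} (hu : u ∈ Θ) :
    Ideal.Quotient.mk (srIdeal N Δ) (u * ∏ k ∈ τ, X k) ∈ mulSpan N Δ Θ' ⊔ faceSpan N Δ Θ := by
  obtain ⟨v, hv, hvu⟩ := exists_mem_coeff_single_eq_of_dual (hΘ' τ hτ) u
  have hsplit : u * ∏ k ∈ τ, X k = v * ∏ k ∈ τ, X k + (u - v) * ∏ k ∈ τ, X k := by ring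
  rw [hsplit, map_add]
  refine add_mem (Submodule.mem_sup_left (mk_mul_mem_mulSpan hv _))
    (Submodule.mem_sup_right (Submodule.subset_span ⟨τ, hτ, u - v, sub_mem hu (hsub hv), ?_, rfl⟩))
  intro k hk
  rw [coeff_sub, hvu k hk, sub_self]

theorem mk_mul_X_mul_mem (hΘ'lin : ∀ l ∈ Θ', l.IsHomogeneous 1)
    {M : Submodule ℝ (MvPolynomial (Fin N) ℝ ⧸ srIdeal N Δ)} (hM : mulSpan N Δ Θ' ≤ M)
    {τ : Finset (Fin N)} (hτ : τ ∈ Δ) {j : Fin N} (hj : j ∈ τ) (u r : MvPolynomial (Fin N) ℝ)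
    (h : ∀ k ∉ τ, Ideal.Quotient.mk (srIdeal N Δ) (u * (X k * r)) ∈ M) :
    Ideal.Quotient.mk (srIdeal N Δ) (u * (X j * r)) ∈ M := by
  obtain ⟨l, hl, hlj, hl0⟩ := hΘ' τ hτ j hj
  have hsplit : u * (X j * r) = l * (u * r) -
      ∑ k ∈ τᶜ, coeff (Finsupp.single k 1) l • (u * (X k * r)) := by
    rw [eq_sub_iff_add_eq]
    conv_rhs => rw [(hΘ'lin l hl).eq_X_add_sum_compl hj hlj hl0]
    simp only [add_mul, Finset.sum_mul, smul_mul_assoc, mul_left_comm u]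
  rw [hsplit, map_sub, map_sum]
  refine sub_mem (hM (mk_mul_mem_mulSpan hl _)) (Submodule.sum_mem _ fun k hk => ?_)
  rw [mk_smul_srIdeal]
  exact M.smul_mem _ (h k (Finset.mem_compl.1 hk))

theorem mk_mul_monomial_mem (hsub : Θ' ≤ Θ) (hΘ'lin : ∀ l ∈ Θ', l.IsHomogeneous 1)
    (a : Fin N →₀ ℕ) {u : MvPolynomial (Fin N) ℝ} (hu : u ∈ Θ) :
    Ideal.Quotient.mk (srIdeal N Δ) (u * monomial a 1) ∈ mulSpan N Δ Θ' ⊔ faceSpan N Δ Θ := by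
  induction hτ : a.support using WellFoundedGT.induction generalizing a with
  | _ τ ih =>
    subst hτ
    by_cases hface : a.support ∈ Δ
    swap
    · rw [Ideal.Quotient.eq_zero_iff_mem.2 (Ideal.mul_mem_left _ _ (monomial_mem_srIdeal hface))]
      exact zero_mem _
    by_cases hsq : ∀ k ∈ a.support, a k = 1
    · rw [monomial_one_eq_prod_X hsq]
      exact mk_mul_prod_X_mem hΘ' hsub hface hu
    push Not at hsq
    obtain ⟨j, hj, hj1⟩ := hsq
    obtain ⟨b, rfl, hb⟩ : ∃ b, a = Finsupp.single j 1 + b ∧ b.support = a.support := by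
      have hj0 := Finsupp.mem_support_iff.1 hj
      refine ⟨a - Finsupp.single j 1,
        (add_tsub_cancel_of_le (Finsupp.single_le_iff.2 (by omega))).symm, ?_⟩
      ext k
      simp only [Finsupp.mem_support_iff, Finsupp.tsub_apply, Finsupp.single_apply]
      split_ifs with hjk
      · subst hjk; omega
      · omega
    have hX (k : Fin N) : monomial (Finsupp.single k 1 + b) (1 : ℝ) = X k * monomial b 1 := by
      rw [X, monomial_mul, one_mul]
    rw [← hb] at hj hface
    rw [hX]
    refine mk_mul_X_mul_mem hΘ' hΘ'lin le_sup_left hface hj u _ fun k hk => ?_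
    rw [← hX]
    exact ih _ (hb ▸ Finsupp.support_ssubset_support_single_add hk) _ rfl

end StanleyReisner

theorem stmt15_general (N : ℕ) (Δ : Finset (Finset (Fin N)))
    (Θ Θ' : Submodule ℝ (MvPolynomial (Fin N) ℝ)) (hsub : Θ' ≤ Θ)
    (hΘlin : ∀ l ∈ Θ, l.IsHomogeneous 1)
    (hΘ' : ∀ σ ∈ Δ, ∀ i ∈ σ, ∃ l ∈ Θ',
      coeff (Finsupp.single i 1) l = 1 ∧
      ∀ k ∈ σ, k ≠ i → coeff (Finsupp.single k 1) l = 0) :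
    mulSpan N Δ Θ =
      mulSpan N Δ Θ' ⊔
        Submodule.span ℝ
          {x : MvPolynomial (Fin N) ℝ ⧸ srIdeal N Δ |
            ∃ τ ∈ Δ, ∃ l ∈ Θ, (∀ k ∈ τ, coeff (Finsupp.single k 1) l = 0) ∧
              x = Ideal.Quotient.mk (srIdeal N Δ) (l * ∏ k ∈ τ, X k)} := by
  change mulSpan N Δ Θ = mulSpan N Δ Θ' ⊔ faceSpan N Δ Θ
  refine le_antisymm (Submodule.span_le.2 ?_) (sup_le (mulSpan_mono hsub) (faceSpan_le_mulSpan Θ))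
  rintro _ ⟨u, hu, r, rfl⟩
  induction r using MvPolynomial.induction_on' with
  | monomial a c =>
    rw [show monomial a c = c • monomial a 1 by rw [smul_monomial, smul_eq_mul, mul_one],
      mul_smul_comm, mk_smul_srIdeal]
    exact Submodule.smul_mem _ _ (mk_mul_monomial_mem hΘ' hsub (fun l hl => hΘlin l (hsub hl)) a hu)
  | add p q hp hq =>
    rw [mul_add, map_add]
    exact add_mem hp hq

/-- under the stated hypothesis on `Θ′ ⊆ Θ`, the subspace `Θ·𝒜` of
`𝒜 = ℝ[∂_1,…,∂_N]/I_Δ` is spanned by `Θ′·𝒜` together with the elements `l·∂_τ`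
over faces `τ ∈ Δ` and `l ∈ Θ` whose coefficient at `∂_k` vanishes for all `k ∈ τ`. -/
theorem stmt15 (N : ℕ) (Δ : Finset (Finset (Fin N)))
    (hΔ : ∀ σ ∈ Δ, ∀ τ ⊆ σ, τ ∈ Δ)
    (Θ Θ' : Submodule ℝ (MvPolynomial (Fin N) ℝ)) (hsub : Θ' ≤ Θ)
    (hΘlin : ∀ l ∈ Θ, l.IsHomogeneous 1)
    (hΘ' : ∀ σ ∈ Δ, ∀ i ∈ σ, ∃ l ∈ Θ',
      coeff (Finsupp.single i 1) l = 1 ∧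
      ∀ k ∈ σ, k ≠ i → coeff (Finsupp.single k 1) l = 0) :
    mulSpan N Δ Θ =
      mulSpan N Δ Θ' ⊔
        Submodule.span ℝ
          {x : MvPolynomial (Fin N) ℝ ⧸ srIdeal N Δ |
            ∃ τ ∈ Δ, ∃ l ∈ Θ, (∀ k ∈ τ, coeff (Finsupp.single k 1) l = 0) ∧
              x = Ideal.Quotient.mk (srIdeal N Δ) (l * ∏ k ∈ τ, X k)} :=
  stmt15_general N Δ Θ Θ' hsub hΘlin hΘ'
end
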